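/- Let f ∈ C¹(ℝ) with f' ∈ L^p(ℝ), 1 < p < ∞, and γ > 0. Then sup_{λ>0} λ^p ∬_{E_{λ,γ/p}} t^{γ−1} dt dx ≤ (C_p^p/γ) ‖f'‖_{L^p(ℝ)}^p, where E_{λ,γ/p} = {(x,t) ∈ ℝ × (0,∞) : |f(x+t) − f(x)| > λ t^{γ/p + 1}} and C_p is the L^p operator norm of the one-sided Hardy–Littlewood maximal operator M g(x) = sup_{t>0} (1/t) ∫_x^{x+t} |g(y)| dy. -/

import Mathlib

/-!
By the fundamental theorem of calculus, `|f (x + t) - f x| ≤ t · M f' (x)` for every `t > 0`.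
Hence the slice of `E_{λ,γ/p}` over `x` lies in the interval `0 < t < (M f' (x) / λ)^(p/γ)`,
whose `t^(γ-1) dt`-measure is `M f' (x)^p / (γ λ^p)`. Integrating in `x` (Tonelli) and applying
the `L^p` bound for `M` gives the claim.
-/

open MeasureTheory Filter Set
open scoped ENNReal

noncomputable section

/-- The measure on `(0,∞)` with density `t^(γ-1)`. -/
def wGamma (γ : ℝ) : Measure ℝ :=
  (volume.restrict (Set.Ioi (0 : ℝ))).withDensity fun t => ENNReal.ofReal (t ^ (γ - 1))

/-- The one-sided Hardy–Littlewood maximal operator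
`M g (x) = sup_{t>0} (1/t) ∫_x^{x+t} |g(y)| dy` (with values in `ℝ≥0∞`). -/
def oneSidedMaximal (g : ℝ → ℝ) (x : ℝ) : ℝ≥0∞ :=
  ⨆ (t : ℝ) (_ : 0 < t),
    (ENNReal.ofReal t)⁻¹ * ∫⁻ y in Set.Ioc x (x + t), ENNReal.ofReal |g y|

instance (γ : ℝ) : SFinite (wGamma γ) := by
  unfold wGamma; infer_instance

lemma wGamma_Ioo {γ : ℝ} (hγ : 0 < γ) {T : ℝ} (hT : 0 ≤ T) :
    wGamma γ (Ioo 0 T) = ENNReal.ofReal (T ^ γ / γ) := by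
  have hint : IntegrableOn (fun t : ℝ => t ^ (γ - 1)) (Ioo 0 T) := by
    have h := intervalIntegral.intervalIntegrable_rpow' (a := 0) (b := T) (r := γ - 1)
      (by linarith)
    rwa [intervalIntegrable_iff_integrableOn_Ioo_of_le hT] at h
  rw [wGamma, withDensity_apply _ measurableSet_Ioo, Measure.restrict_restrict measurableSet_Ioo,
    Ioo_inter_Ioi, max_self,
    ← ofReal_integral_eq_lintegral_ofReal hint
      (ae_restrict_of_forall_mem measurableSet_Ioo fun t ht => Real.rpow_nonneg ht.1.le _),
    ← integral_Ioc_eq_integral_Ioo, ← intervalIntegral.integral_of_le hT,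
    integral_rpow (Or.inl (by linarith)), sub_add_cancel, Real.zero_rpow hγ.ne', sub_zero]

lemma ofReal_abs_sub_le_mul_oneSidedMaximal {f : ℝ → ℝ} (hf : ContDiff ℝ 1 f) (x : ℝ)
    {t : ℝ} (ht : 0 < t) :
    ENNReal.ofReal |f (x + t) - f x| ≤ ENNReal.ofReal t * oneSidedMaximal (deriv f) x := by
  have hxt : x ≤ x + t := by linarith
  have hftc : ∫ y in Ioc x (x + t), deriv f y = f (x + t) - f x := by
    rw [← intervalIntegral.integral_of_le hxt]
    exact intervalIntegral.integral_deriv_eq_sub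
      (fun y _ => (hf.differentiable one_ne_zero).differentiableAt)
      (hf.continuous_deriv_one.intervalIntegrable _ _)
  calc ENNReal.ofReal |f (x + t) - f x|
      ≤ ∫⁻ y in Ioc x (x + t), ENNReal.ofReal |deriv f y| := by
        simpa only [hftc, Real.enorm_eq_ofReal_abs] using
          enorm_integral_le_lintegral_enorm (μ := volume.restrict (Ioc x (x + t))) (deriv f)
    _ = ENNReal.ofReal t * ((ENNReal.ofReal t)⁻¹ *
          ∫⁻ y in Ioc x (x + t), ENNReal.ofReal |deriv f y|) :=
        (ENNReal.mul_inv_cancel_left (by simpa using ht) ENNReal.ofReal_ne_top).symm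
    _ ≤ ENNReal.ofReal t * oneSidedMaximal (deriv f) x := by
        gcongr
        unfold oneSidedMaximal
        exact le_iSup₂_of_le t ht le_rfl

lemma lt_rpow_inv_of_mul_rpow_add_one_lt {l s t a : ℝ} (hl : 0 < l) (hs : 0 < s) (ht : 0 < t)
    (h : l * t ^ (s + 1) < t * a) : t < (a / l) ^ s⁻¹ := by
  have hts : 0 < t ^ s := Real.rpow_pos_of_pos ht s
  have hlt : t ^ s < a / l := by
    rw [Real.rpow_add_one ht.ne'] at h
    rw [lt_div_iff₀ hl]
    nlinarith
  exact (Real.lt_rpow_inv_iff_of_pos ht.le (hts.trans hlt).le hs).2 hlt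

-- The set `E_{λ,s}`, with `l` in place of `λ`.
def differenceLevelSet (f : ℝ → ℝ) (l s : ℝ) : Set (ℝ × ℝ) :=
  {q | 0 < q.2 ∧ l * q.2 ^ (s + 1) < |f (q.1 + q.2) - f q.1|}

lemma measurableSet_differenceLevelSet {f : ℝ → ℝ} (hf : Continuous f) (l s : ℝ) :
    MeasurableSet (differenceLevelSet f l s) :=
  (measurable_snd measurableSet_Ioi).inter <| measurableSet_lt
    (measurable_const.mul (measurable_snd.pow_const _))
    ((hf.comp (continuous_fst.add continuous_snd)).sub (hf.comp continuous_fst)).abs.measurable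

lemma ofReal_rpow_mul_wGamma_slice_le {p γ : ℝ} (hp : 0 < p) (hγ : 0 < γ) {f : ℝ → ℝ}
    (hf : ContDiff ℝ 1 f) {l : ℝ} (hl : 0 < l) (x : ℝ) :
    ENNReal.ofReal (l ^ p) * wGamma γ (Prod.mk x ⁻¹' differenceLevelSet f l (γ / p))
      ≤ ENNReal.ofReal γ⁻¹ * oneSidedMaximal (deriv f) x ^ p := by
  rcases eq_or_ne (oneSidedMaximal (deriv f) x) ∞ with hM | hM
  · simp [hM, ENNReal.top_rpow_of_pos hp, ENNReal.mul_top, hγ]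
  set m := (oneSidedMaximal (deriv f) x).toReal
  have hm : 0 ≤ m := ENNReal.toReal_nonneg
  have hslice : Prod.mk x ⁻¹' differenceLevelSet f l (γ / p) ⊆ Ioo 0 ((m / l) ^ (γ / p)⁻¹) := by
    rintro t ⟨ht, hlt⟩
    have hbound : |f (x + t) - f x| ≤ t * m := by
      have := ofReal_abs_sub_le_mul_oneSidedMaximal hf x ht
      rwa [← ENNReal.ofReal_toReal hM, ← ENNReal.ofReal_mul ht.le,
        ENNReal.ofReal_le_ofReal_iff (mul_nonneg ht.le hm)] at this
    exact ⟨ht, lt_rpow_inv_of_mul_rpow_add_one_lt hl (div_pos hγ hp) ht (hlt.trans_le hbound)⟩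
  have hmeasure : ENNReal.ofReal (l ^ p) * wGamma γ (Ioo 0 ((m / l) ^ (γ / p)⁻¹))
      = ENNReal.ofReal γ⁻¹ * ENNReal.ofReal (m ^ p) := by
    rw [wGamma_Ioo hγ (by positivity), ← Real.rpow_mul (by positivity), inv_div,
      div_mul_cancel₀ _ hγ.ne', Real.div_rpow hm hl.le, ← ENNReal.ofReal_mul (by positivity),
      ← ENNReal.ofReal_mul (by positivity)]
    congr 1
    field_simp
  calc ENNReal.ofReal (l ^ p) * wGamma γ (Prod.mk x ⁻¹' differenceLevelSet f l (γ / p))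
      ≤ ENNReal.ofReal (l ^ p) * wGamma γ (Ioo 0 ((m / l) ^ (γ / p)⁻¹)) := by
        gcongr
    _ = ENNReal.ofReal γ⁻¹ * oneSidedMaximal (deriv f) x ^ p := by
        rw [hmeasure, ← ENNReal.ofReal_rpow_of_nonneg hm hp.le, ENNReal.ofReal_toReal hM]

theorem weighted_bsy_upper_bound_one_dim_general
    (p γ : ℝ) (hp : 1 < p) (hγ : 0 < γ)
    (f : ℝ → ℝ) (hf : ContDiff ℝ 1 f)
    (Cp : ℝ)
    (hmaximal : ∀ g : ℝ → ℝ, Measurable g →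
      ∫⁻ x, (oneSidedMaximal g x) ^ p
        ≤ ENNReal.ofReal (Cp ^ p) * ∫⁻ x, ENNReal.ofReal (|g x| ^ p)) :
    (⨆ (l : ℝ) (_ : 0 < l), ENNReal.ofReal (l ^ p) *
        (volume.prod (wGamma γ))
          {q : ℝ × ℝ | 0 < q.2 ∧ l * q.2 ^ (γ / p + 1) < |f (q.1 + q.2) - f q.1|})
      ≤ ENNReal.ofReal (Cp ^ p / γ) * ∫⁻ x, ENNReal.ofReal (|deriv f x| ^ p) := by
  refine iSup₂_le fun l hl => ?_
  calc ENNReal.ofReal (l ^ p) * (volume.prod (wGamma γ)) (differenceLevelSet f l (γ / p))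
      = ∫⁻ x, ENNReal.ofReal (l ^ p) *
          wGamma γ (Prod.mk x ⁻¹' differenceLevelSet f l (γ / p)) := by
        rw [Measure.prod_apply (measurableSet_differenceLevelSet hf.continuous l _),
          lintegral_const_mul' _ _ ENNReal.ofReal_ne_top]
    _ ≤ ∫⁻ x, ENNReal.ofReal γ⁻¹ * oneSidedMaximal (deriv f) x ^ p :=
        lintegral_mono (ofReal_rpow_mul_wGamma_slice_le (by linarith) hγ hf hl)
    _ = ENNReal.ofReal γ⁻¹ * ∫⁻ x, oneSidedMaximal (deriv f) x ^ p :=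
        lintegral_const_mul' _ _ ENNReal.ofReal_ne_top
    _ ≤ ENNReal.ofReal γ⁻¹ *
          (ENNReal.ofReal (Cp ^ p) * ∫⁻ x, ENNReal.ofReal (|deriv f x| ^ p)) := by
        gcongr
        exact hmaximal _ hf.continuous_deriv_one.measurable
    _ = ENNReal.ofReal (Cp ^ p / γ) * ∫⁻ x, ENNReal.ofReal (|deriv f x| ^ p) := by
        rw [← mul_assoc, ← ENNReal.ofReal_mul (inv_nonneg.2 hγ.le), inv_mul_eq_div]

/-- Weighted Brezis–Van Schaftingen–Yung upper bound for first-order Sobolev seminorms: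
`sup_{λ>0} λ^p ∬_{E_{λ,γ/p}} t^{γ−1} dt dx ≤ (C_p^p/γ) ‖f'‖_p^p`, where
`E_{λ,γ/p} = {(x,t) : |f(x+t)−f(x)| > λ t^{γ/p+1}}` and `C_p` is an `L^p` bound for
the one-sided Hardy–Littlewood maximal operator. -/
theorem weighted_bsy_upper_bound_one_dim
    (p γ : ℝ) (hp : 1 < p) (hγ : 0 < γ)
    (f : ℝ → ℝ) (hf : ContDiff ℝ 1 f)
    (hf' : MemLp (deriv f) (ENNReal.ofReal p) volume)
    (Cp : ℝ) (hCp : 0 ≤ Cp)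
    (hmaximal : ∀ g : ℝ → ℝ, Measurable g →
      ∫⁻ x, (oneSidedMaximal g x) ^ p
        ≤ ENNReal.ofReal (Cp ^ p) * ∫⁻ x, ENNReal.ofReal (|g x| ^ p)) :
    (⨆ (l : ℝ) (_ : 0 < l), ENNReal.ofReal (l ^ p) *
        (volume.prod (wGamma γ))
          {q : ℝ × ℝ | 0 < q.2 ∧ l * q.2 ^ (γ / p + 1) < |f (q.1 + q.2) - f q.1|})
      ≤ ENNReal.ofReal (Cp ^ p / γ) * ∫⁻ x, ENNReal.ofReal (|deriv f x| ^ p) :=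
  weighted_bsy_upper_bound_one_dim_general p γ hp hγ f hf Cp hmaximal
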